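/- arXiv:1503.01689 — 2 statements merged into one kernel-verified Lean document; each statement's English description precedes it below -/
import Mathlib

section
/- Let n be a measurable kernel with |n(x,y)| ≤ β(y) a.e., β ∈ L¹, and let N be the induced integral operator (Nu)(x) = ∫ n(x, x−y) u(y) dy on L∞(ℝᶜ, ℝ). Then ess sup_x ∫ |n(x,y)| dy ≤ ‖N : L∞ → L∞‖. -/
/-!
For a.e. `x`, testing `N` against a unit-ball function `u ∈ L∞` gives
`∫ n(x, x - y) u(y) dy ≤ ‖N‖`; with `u` the sign of `y ↦ n(x, x - y)` the left side is
`∫ |n(x, y)| dy`. The exceptional null set depends on `u`, so we only test against the countably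
many functions `clampUnit ∘ v`, `v` in a countable dense subset of `L¹`, and recover every
`L¹`-function bounded by `1` (in particular `clampUnit (k * g) → sign g`) by passing to an
a.e. convergent subsequence and dominated convergence.
-/

open MeasureTheory Filter Topology
open scoped ENNReal

def clampUnit (t : ℝ) : ℝ := max (-1) (min 1 t)

lemma abs_clampUnit_le_one (t : ℝ) : |clampUnit t| ≤ 1 :=
  abs_le.2 ⟨le_max_left _ _, max_le (by norm_num) (min_le_left _ _)⟩

lemma clampUnit_of_abs_le {t : ℝ} (h : |t| ≤ 1) : clampUnit t = t := by
  rw [clampUnit, min_eq_right (abs_le.1 h).2, max_eq_right (abs_le.1 h).1]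

lemma norm_mul_clampUnit_le (a t : ℝ) : ‖a * clampUnit t‖ ≤ |a| := by
  rw [norm_mul, Real.norm_eq_abs, Real.norm_eq_abs]
  exact mul_le_of_le_one_right (abs_nonneg a) (abs_clampUnit_le_one t)

lemma lipschitzWith_clampUnit : LipschitzWith 1 clampUnit :=
  (LipschitzWith.id.const_min 1).const_max (-1)

lemma abs_clampUnit_le_abs (t : ℝ) : |clampUnit t| ≤ |t| := by
  simpa [Real.dist_eq, clampUnit] using lipschitzWith_clampUnit.dist_le_mul t 0

lemma continuous_clampUnit : Continuous clampUnit :=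
  lipschitzWith_clampUnit.continuous

lemma tendsto_mul_clampUnit_nat_mul (a : ℝ) :
    Tendsto (fun k : ℕ => a * clampUnit (k * a)) atTop (𝓝 |a|) := by
  rcases lt_trichotomy a 0 with ha | rfl | ha
  · refine tendsto_const_nhds.congr' ?_
    filter_upwards
      [(tendsto_natCast_atTop_atTop.atTop_mul_const (neg_pos.2 ha)).eventually_ge_atTop 1] with k hk
    rw [clampUnit, min_eq_right (by nlinarith), max_eq_left (by nlinarith), abs_of_neg ha]
    ring
  · simp
  · refine tendsto_const_nhds.congr' ?_
    filter_upwards [(tendsto_natCast_atTop_atTop.atTop_mul_const ha).eventually_ge_atTop 1]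
      with k hk
    rw [clampUnit, min_eq_left hk, max_eq_right (by norm_num), abs_of_pos ha, mul_one]

section Lp

variable {α : Type*} [MeasurableSpace α] {μ : Measure α}

lemma MeasureTheory.Lp.ae_norm_le_norm_top {E : Type*} [NormedAddCommGroup E] (f : Lp E ∞ μ) :
    ∀ᵐ x ∂μ, ‖f x‖ ≤ ‖f‖ := by
  filter_upwards [ae_le_eLpNormEssSup (f := ⇑f) (μ := μ)] with x hx
  rw [Lp.norm_def, eLpNorm_exponent_top]
  exact (ENNReal.toReal_mono (Lp.eLpNorm_ne_top f) hx).trans_eq' (by simp)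

lemma exists_Lp_top_ae_eq_clampUnit_comp {f : α → ℝ} (hf : AEStronglyMeasurable f μ) :
    ∃ u : Lp ℝ ∞ μ, ‖u‖ ≤ 1 ∧ u =ᵐ[μ] fun y => clampUnit (f y) := by
  have hbound : ∀ᵐ y ∂μ, ‖clampUnit (f y)‖ ≤ 1 :=
    .of_forall fun y => abs_clampUnit_le_one (f y)
  have hmem : MemLp (fun y => clampUnit (f y)) ∞ μ :=
    memLp_top_of_bound (continuous_clampUnit.comp_aestronglyMeasurable hf) 1 hbound
  refine ⟨hmem.toLp _, ?_, hmem.coeFn_toLp⟩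
  rw [Lp.norm_toLp, eLpNorm_exponent_top]
  exact ENNReal.toReal_le_of_le_ofReal zero_le_one (eLpNormEssSup_le_of_ae_bound hbound)

lemma ae_integral_mul_le_opNorm_mul {β : Type*} [MeasurableSpace β] {ν : Measure β}
    {K : β → α → ℝ} {N : Lp ℝ ∞ μ →L[ℝ] Lp ℝ ∞ ν}
    (hN : ∀ u, ⇑(N u) =ᵐ[ν] fun x => ∫ y, K x y * u y ∂μ) (u : Lp ℝ ∞ μ) :
    ∀ᵐ x ∂ν, ∫ y, K x y * u y ∂μ ≤ ‖N‖ * ‖u‖ := by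
  filter_upwards [hN u, Lp.ae_norm_le_norm_top (N u)] with x hx hle
  rw [← hx]
  exact (le_abs_self _).trans (hle.trans (N.le_opNorm u))

end Lp

section Duality

variable {α : Type*} [MeasurableSpace α] {μ : Measure α} {g : α → ℝ} {C : ℝ}

lemma integral_mul_le_of_dense {S : Set (Lp ℝ 1 μ)} (hS : Dense S) (hg : Integrable g μ)
    (hC : ∀ v ∈ S, ∫ y, g y * clampUnit (v y) ∂μ ≤ C) {w : α → ℝ} (hw : Integrable w μ)
    (hw1 : ∀ y, |w y| ≤ 1) : ∫ y, g y * w y ∂μ ≤ C := by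
  obtain ⟨u, huS, hu⟩ := mem_closure_iff_seq_limit.mp (hS (hw.toL1 w))
  obtain ⟨φ, -, hφ⟩ := (tendstoInMeasure_of_tendsto_Lp hu).exists_seq_tendsto_ae
  have hlim : Tendsto (fun i => ∫ y, g y * clampUnit (u (φ i) y) ∂μ) atTop
      (𝓝 (∫ y, g y * w y ∂μ)) := by
    refine tendsto_integral_of_dominated_convergence (fun y => |g y|)
      (fun i => hg.aestronglyMeasurable.mul
        (continuous_clampUnit.comp_aestronglyMeasurable (Lp.aestronglyMeasurable _)))
      hg.abs (fun i => .of_forall fun y => norm_mul_clampUnit_le _ _) ?_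
    filter_upwards [hφ, hw.coeFn_toL1] with y hy hwy
    rw [← clampUnit_of_abs_le (hw1 y), ← hwy]
    exact ((continuous_clampUnit.tendsto _).comp hy).const_mul (g y)
  exact le_of_tendsto' hlim fun i => hC _ (huS _)

lemma integral_abs_le_of_forall_integral_mul_le (hg : Integrable g μ)
    (hC : ∀ w : α → ℝ, Integrable w μ → (∀ y, |w y| ≤ 1) → ∫ y, g y * w y ∂μ ≤ C) :
    ∫ y, |g y| ∂μ ≤ C := by
  have hw : ∀ k : ℕ, Integrable (fun y => clampUnit (k * g y)) μ := fun k =>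
    (hg.const_mul k).mono
      (continuous_clampUnit.comp_aestronglyMeasurable (hg.aestronglyMeasurable.const_mul k))
      (.of_forall fun y => by simpa only [Real.norm_eq_abs] using abs_clampUnit_le_abs _)
  have hlim : Tendsto (fun k : ℕ => ∫ y, g y * clampUnit (k * g y) ∂μ) atTop
      (𝓝 (∫ y, |g y| ∂μ)) :=
    tendsto_integral_of_dominated_convergence (fun y => |g y|)
      (fun k => hg.aestronglyMeasurable.mul (hw k).aestronglyMeasurable) hg.abs
      (fun k => .of_forall fun y => norm_mul_clampUnit_le _ _)
      (.of_forall fun y => tendsto_mul_clampUnit_nat_mul (g y))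
  exact le_of_tendsto' hlim fun k => hC _ (hw k) fun y => abs_clampUnit_le_one _

lemma integral_abs_le_of_dense {S : Set (Lp ℝ 1 μ)} (hS : Dense S) (hg : Integrable g μ)
    (hC : ∀ v ∈ S, ∫ y, g y * clampUnit (v y) ∂μ ≤ C) : ∫ y, |g y| ∂μ ≤ C :=
  integral_abs_le_of_forall_integral_mul_le hg fun _ hw hw1 =>
    integral_mul_le_of_dense hS hg hC hw hw1

end Duality

lemma ae_integrable_kernel_sub {G : Type*} [MeasurableSpace G] [AddGroup G] [MeasurableAdd₂ G]
    [MeasurableNeg G] {μ : Measure G} [SFinite μ] [μ.IsAddLeftInvariant] [μ.IsNegInvariant]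
    {β : G → ℝ} (hβ : Integrable β μ) {n : G × G → ℝ} (hn : Measurable n)
    (hdom : ∀ᵐ z ∂μ.prod μ, |n z| ≤ β z.2) :
    ∀ᵐ x ∂μ, Integrable (fun y => n (x, x - y)) μ := by
  filter_upwards [Measure.ae_ae_of_ae_prod hdom] with x hx
  have hx' : ∀ᵐ y ∂μ, ‖n (x, x - y)‖ ≤ β (x - y) :=
    (Measure.measurePreserving_sub_left μ x).quasiMeasurePreserving.ae hx
  have hmeas : Measurable fun y => n (x, x - y) :=
    hn.comp (measurable_const.prodMk (measurable_const.sub measurable_id))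
  exact (hβ.comp_sub_left x).mono' hmeas.aestronglyMeasurable hx'

theorem stmt7 (c : ℕ)
    (β : (Fin c → ℝ) → ℝ) (hβ : Integrable β)
    (n : (Fin c → ℝ) × (Fin c → ℝ) → ℝ) (hn : Measurable n)
    (hdom : ∀ᵐ z ∂(volume : Measure ((Fin c → ℝ) × (Fin c → ℝ))), |n z| ≤ β z.2)
    (N : Lp ℝ ⊤ (volume : Measure (Fin c → ℝ)) →L[ℝ] Lp ℝ ⊤ volume)
    (hN : ∀ u : Lp ℝ ⊤ (volume : Measure (Fin c → ℝ)),
      ⇑(N u) =ᵐ[volume] fun x => ∫ y, n (x, x - y) * u y) :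
    essSup (fun x => ENNReal.ofReal (∫ y, |n (x, y)|)) (volume : Measure (Fin c → ℝ))
      ≤ ENNReal.ofReal ‖N‖ := by
  have : Fact ((1 : ℝ≥0∞) ≠ ∞) := ⟨ENNReal.one_ne_top⟩
  obtain ⟨S, hSc, hSd⟩ :=
    TopologicalSpace.exists_countable_dense (Lp ℝ 1 (volume : Measure (Fin c → ℝ)))
  have hS : ∀ᵐ x, ∀ v ∈ S, ∫ y, n (x, x - y) * clampUnit (v y) ≤ ‖N‖ := by
    refine (ae_ball_iff hSc).2 fun v _ => ?_
    obtain ⟨u, hu1, hu⟩ := exists_Lp_top_ae_eq_clampUnit_comp (Lp.aestronglyMeasurable v)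
    filter_upwards [ae_integral_mul_le_opNorm_mul hN u] with x hx
    rw [← integral_congr_ae (hu.mono fun y hy => congrArg (n (x, x - y) * ·) hy)]
    exact hx.trans (mul_le_of_le_one_right (norm_nonneg N) hu1)
  have hint := ae_integrable_kernel_sub hβ hn (by rwa [← Measure.volume_eq_prod])
  refine essSup_le_of_ae_le _ ?_
  filter_upwards [hS, hint] with x hSx hx
  rw [← integral_sub_left_eq_self _ volume x]
  exact ENNReal.ofReal_le_ofReal (integral_abs_le_of_dense hSd hx hSx)
end

section
/- Let n be a kernel with |n(x,y)| ≤ β(y) for all (x,y), β ∈ L¹, such that x ↦ n(x, ·) is uniformly continuous from ℝᶜ to L¹(ℝᶜ). Then the induced operator N on L∞(ℝᶜ) satisfies: the map h ↦ S_h N S_{−h} is continuous in the operator norm on L∞, where S_h is translation by h. -/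
/-!
On `L∞` the operator norm of an integral operator is at most the supremum over `x` of the
`L¹` norm of its kernel row. The operators `S_h N S_{-h}` and `N` have the kernel rows
`n (x - h, ·)` and `n (x, ·)` (after the change of variables `y ↦ x - y`), so `‖S_h N S_{-h} - N‖`
is bounded by `sup_x ∫ |n (x - h, z) - n (x, z)| dz`, which is small for small `h` by the uniform
continuity of `x ↦ n (x, ·)` into `L¹`.
-/

open MeasureTheory
open scoped ENNReal

namespace MeasureTheory.Lp

variable {α E : Type*} [MeasurableSpace α] {μ : Measure α} [NormedAddCommGroup E]

lemma ae_norm_le_norm_top_s12 (u : Lp E ∞ μ) : ∀ᵐ x ∂μ, ‖u x‖ ≤ ‖u‖ := by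
  have hfin : eLpNormEssSup u μ ≠ ∞ := by
    rw [← eLpNorm_exponent_top]; exact Lp.eLpNorm_ne_top u
  filter_upwards [ae_le_eLpNormEssSup (f := ⇑u) (μ := μ)] with x hx
  simpa [Lp.norm_def, eLpNorm_exponent_top] using ENNReal.toReal_mono hfin hx

lemma norm_le_of_ae_bound_top {u : Lp E ∞ μ} {C : ℝ} (hC : 0 ≤ C)
    (hu : ∀ᵐ x ∂μ, ‖u x‖ ≤ C) : ‖u‖ ≤ C := by
  rw [Lp.norm_def, eLpNorm_exponent_top]
  exact ENNReal.toReal_le_of_le_ofReal hC (eLpNormEssSup_le_of_ae_bound hu)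

end MeasureTheory.Lp

section KernelOperator

variable {𝕜 : Type*} [RCLike 𝕜]

lemma norm_integral_mul_le_integral_norm_mul_norm {α : Type*} [MeasurableSpace α]
    {μ : Measure α} {k : α → 𝕜} (hk : Integrable k μ) (u : Lp 𝕜 ∞ μ) :
    ‖∫ y, k y * u y ∂μ‖ ≤ (∫ y, ‖k y‖ ∂μ) * ‖u‖ := by
  rw [← integral_mul_const]
  refine norm_integral_le_of_norm_le (hk.norm.mul_const _) ?_
  filter_upwards [Lp.ae_norm_le_norm_top_s12 u] with y hy
  rw [norm_mul]
  exact mul_le_mul_of_nonneg_left hy (norm_nonneg _)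

variable {G : Type*} [MeasurableSpace G] [AddGroup G] [MeasurableAdd G] [MeasurableNeg G]
  {μ : Measure G} [μ.IsNegInvariant] [μ.IsAddLeftInvariant]

lemma norm_integral_comp_sub_mul_sub_le {f g : G → 𝕜} (hf : Integrable f μ)
    (hg : Integrable g μ) (u : Lp 𝕜 ∞ μ) (x : G) :
    ‖∫ y, f (x - y) * u y ∂μ - ∫ y, g (x - y) * u y ∂μ‖ ≤ (∫ z, ‖f z - g z‖ ∂μ) * ‖u‖ := by
  have hfu : Integrable (fun y => f (x - y) * u y) μ :=
    (hf.comp_sub_left x).mul_of_top_left (Lp.memLp u)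
  have hgu : Integrable (fun y => g (x - y) * u y) μ :=
    (hg.comp_sub_left x).mul_of_top_left (Lp.memLp u)
  rw [← integral_sub hfu hgu, ← integral_sub_left_eq_self (fun z => ‖f z - g z‖) μ x]
  simp_rw [← sub_mul]
  exact norm_integral_mul_le_integral_norm_mul_norm
    ((hf.comp_sub_left x).sub (hg.comp_sub_left x)) u

lemma opNorm_sub_le_of_kernel {T S : Lp 𝕜 ∞ μ →L[𝕜] Lp 𝕜 ∞ μ} {k₁ k₂ : G → G → 𝕜}
    (hk₁ : ∀ x, Integrable (k₁ x) μ) (hk₂ : ∀ x, Integrable (k₂ x) μ) {C : ℝ} (hC : 0 ≤ C)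
    (hk : ∀ x, ∫ z, ‖k₁ x z - k₂ x z‖ ∂μ ≤ C)
    (hT : ∀ u : Lp 𝕜 ∞ μ, ⇑(T u) =ᵐ[μ] fun x => ∫ y, k₁ x (x - y) * u y ∂μ)
    (hS : ∀ u : Lp 𝕜 ∞ μ, ⇑(S u) =ᵐ[μ] fun x => ∫ y, k₂ x (x - y) * u y ∂μ) :
    ‖T - S‖ ≤ C := by
  refine ContinuousLinearMap.opNorm_le_bound _ hC fun u => ?_
  refine Lp.norm_le_of_ae_bound_top (by positivity) ?_
  filter_upwards [Lp.coeFn_sub (T u) (S u), hT u, hS u] with x hsub hTx hSx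
  rw [sub_apply, hsub, Pi.sub_apply, hTx, hSx]
  calc _ ≤ (∫ z, ‖k₁ x z - k₂ x z‖ ∂μ) * ‖u‖ :=
        norm_integral_comp_sub_mul_sub_le (hk₁ x) (hk₂ x) u x
    _ ≤ C * ‖u‖ := mul_le_mul_of_nonneg_right (hk x) (norm_nonneg u)

end KernelOperator

/-- If the kernel `n` is dominated by `β ∈ L¹` and `x ↦ n(x,·)` is uniformly
continuous into `L¹`, then the induced operator `N` on `L∞` is such that
`h ↦ S_h N S_{-h}` is norm continuous.  The operator `S_h N S_{-h}` is encoded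
as any bounded operator `T` representing the translated kernel
`(x,y) ↦ n (x-h, y)`. -/
theorem stmt12 (c : ℕ)
    (β : (Fin c → ℝ) → ℝ) (hβ : Integrable β)
    (n : (Fin c → ℝ) × (Fin c → ℝ) → ℝ) (hn : Measurable n)
    (hdom : ∀ x y : Fin c → ℝ, |n (x, y)| ≤ β y)
    (hucont : ∀ ε > (0 : ℝ), ∃ δ > (0 : ℝ), ∀ x x' : Fin c → ℝ, ‖x - x'‖ < δ →
      ∫ y, |n (x, y) - n (x', y)| < ε)
    (N : Lp ℝ ⊤ (volume : Measure (Fin c → ℝ)) →L[ℝ] Lp ℝ ⊤ volume)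
    (hN : ∀ u : Lp ℝ ⊤ (volume : Measure (Fin c → ℝ)),
      ⇑(N u) =ᵐ[volume] fun x => ∫ y, n (x, x - y) * u y) :
    ∀ ε > (0 : ℝ), ∃ δ > (0 : ℝ),
      ∀ (h : Fin c → ℝ) (T : Lp ℝ ⊤ (volume : Measure (Fin c → ℝ)) →L[ℝ] Lp ℝ ⊤ volume),
        ‖h‖ < δ →
        (∀ u : Lp ℝ ⊤ (volume : Measure (Fin c → ℝ)),
          ⇑(T u) =ᵐ[volume] fun x => ∫ y, n (x - h, x - y) * u y) →
        ‖T - N‖ < ε := by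
  intro ε hε
  obtain ⟨δ, hδ, hclose⟩ := hucont (ε / 2) (half_pos hε)
  refine ⟨δ, hδ, fun h T hh hT => ?_⟩
  have hslice : ∀ a, Integrable fun z => n (a, z) := fun a =>
    hβ.mono' (hn.comp measurable_prodMk_left).aestronglyMeasurable (ae_of_all _ (hdom a))
  have hrow : ∀ x, ∫ z, ‖n (x - h, z) - n (x, z)‖ ≤ ε / 2 := fun x =>
    (hclose (x - h) x (by simpa using hh)).le
  calc ‖T - N‖ ≤ ε / 2 := opNorm_sub_le_of_kernel (fun x => hslice (x - h)) hslice
        (half_pos hε).le hrow hT hN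
    _ < ε := half_lt_self hε
end
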